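/- arXiv:1502.05136 — 4 statements merged into one kernel-verified Lean document; each statement's English description precedes it below -/
import Mathlib

section
/- Let A and B be Banach algebras and T : B → A a continuous algebra homomorphism with ‖T‖ ≤ 1. Then the Cartesian product A × B, equipped with the multiplication (a₁,b₁)·(a₂,b₂) = (a₁a₂ + a₁T(b₂) + T(b₁)a₂, b₁b₂) and the norm ‖(a,b)‖ = ‖a‖ + ‖b‖, is a Banach algebra (in particular the multiplication is associative and submultiplicative for this norm). -/
open ContinuousLinearMap NormedSpace

variable {A B : Type*}
  [NonUnitalNormedRing A] [NormedSpace ℂ A] [IsScalarTower ℂ A A] [SMulCommClass ℂ A A]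
  [CompleteSpace A]
  [NonUnitalNormedRing B] [NormedSpace ℂ B] [IsScalarTower ℂ B B] [SMulCommClass ℂ B B]
  [CompleteSpace B]

/-- The morphism-product multiplication on `A × B`:
`(a₁,b₁)·(a₂,b₂) = (a₁a₂ + a₁T(b₂) + T(b₁)a₂, b₁b₂)`. -/
noncomputable def tMul (T : B →L[ℂ] A) (u v : A × B) : A × B :=
  (u.1 * v.1 + u.1 * T v.2 + T u.2 * v.1, u.2 * v.2)

/-- The ℓ¹ norm `‖(a,b)‖ = ‖a‖ + ‖b‖` on `A × B`. -/
noncomputable def tNorm (u : A × B) : ℝ := ‖u.1‖ + ‖u.2‖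

/-- Auxiliary map: for `Φ` in the second dual of `E` and a bundled bilinear
multiplication `M` on `E`, this is `f ↦ (a ↦ Φ (f ∘ M a))`, i.e. `f ↦ Φ · f`. -/
noncomputable def rAct {E : Type*} [NormedAddCommGroup E] [NormedSpace ℂ E]
    (M : E →L[ℂ] E →L[ℂ] E) (Φ : StrongDual ℂ (StrongDual ℂ E)) : StrongDual ℂ E →L[ℂ] StrongDual ℂ E :=
  (compL ℂ E (StrongDual ℂ E) ℂ Φ).comp
    (((compL ℂ E (E →L[ℂ] E) (StrongDual ℂ E)).flip M).comp (compL ℂ E E ℂ))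

/-- The first Arens product `Φ □ Ψ` on the second dual of `E`, where the
multiplication of `E` is given by the bundled bilinear map `M`:
`⟨Φ□Ψ, f⟩ = ⟨Φ, Ψ·f⟩` with `(Ψ·f)(a) = Ψ(f·a)` and `(f·a)(x) = f(ax)`. -/
noncomputable def arens1 {E : Type*} [NormedAddCommGroup E] [NormedSpace ℂ E]
    (M : E →L[ℂ] E →L[ℂ] E) (Φ Ψ : StrongDual ℂ (StrongDual ℂ E)) : StrongDual ℂ (StrongDual ℂ E) :=
  Φ.comp (rAct M Ψ)

/-- The second Arens product `Φ ◊ Ψ` on the second dual of `E`: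
`⟨Φ◊Ψ, f⟩ = ⟨Ψ, f·Φ⟩` with `(f·Φ)(a) = Φ(a·f)` and `(a·f)(x) = f(xa)`. -/
noncomputable def arens2 {E : Type*} [NormedAddCommGroup E] [NormedSpace ℂ E]
    (M : E →L[ℂ] E →L[ℂ] E) (Φ Ψ : StrongDual ℂ (StrongDual ℂ E)) : StrongDual ℂ (StrongDual ℂ E) :=
  Ψ.comp (rAct M.flip Φ)

/-- Bundled bilinear map `(u,v) ↦ M (f u) (g v)`. -/
noncomputable def bcomp {P E : Type*} [NormedAddCommGroup P] [NormedSpace ℂ P]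
    [NormedAddCommGroup E] [NormedSpace ℂ E]
    (M : E →L[ℂ] E →L[ℂ] E) (f g : P →L[ℂ] E) : P →L[ℂ] P →L[ℂ] E :=
  ((compL ℂ P E E).flip g).comp (M.comp f)

/-- The morphism-product multiplication `tMul T`, as a bundled bilinear map;
`tMulCLM T u v = tMul T u v`. -/
noncomputable def tMulCLM (T : B →L[ℂ] A) : (A × B) →L[ℂ] (A × B) →L[ℂ] (A × B) :=
  ((compL ℂ (A × B) A (A × B) (inl ℂ A B)).comp
    (bcomp (mul ℂ A) (fst ℂ A B) (fst ℂ A B + T.comp (snd ℂ A B)) +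
     bcomp (mul ℂ A) (T.comp (snd ℂ A B)) (fst ℂ A B))) +
  ((compL ℂ (A × B) B (A × B) (inr ℂ A B)).comp
    (bcomp (mul ℂ B) (snd ℂ A B) (snd ℂ A B)))

/-- The adjoint `T' : A' → B'`, `T'(f) = f ∘ T`. -/
noncomputable def dualT (T : B →L[ℂ] A) : StrongDual ℂ A →L[ℂ] StrongDual ℂ B := (compL ℂ B A ℂ).flip T

/-- The double adjoint `T'' : B'' → A''`, `T''(F) = F ∘ T'`. -/
noncomputable def ddT (T : B →L[ℂ] A) : StrongDual ℂ (StrongDual ℂ B) →L[ℂ] StrongDual ℂ (StrongDual ℂ A) :=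
  (compL ℂ (StrongDual ℂ A) (StrongDual ℂ B) ℂ).flip (dualT T)

/-- The identification `Θ : A'' × B'' → (A × B)''`, `Θ(Φ,Ψ)(F) = Φ(F∘inl) + Ψ(F∘inr)`,
i.e. `Θ(Φ,Ψ)(f,g) = Φ(f) + Ψ(g)` under the identification `(A × B)' ≅ A' × B'`. -/
noncomputable def Theta (Φ : StrongDual ℂ (StrongDual ℂ A)) (Ψ : StrongDual ℂ (StrongDual ℂ B)) :
    StrongDual ℂ (StrongDual ℂ (A × B)) :=
  Φ.comp ((compL ℂ A (A × B) ℂ).flip (inl ℂ A B)) +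
  Ψ.comp ((compL ℂ B (A × B) ℂ).flip (inr ℂ A B))

/-- The functional `(a,b) ↦ φ(a) + φ(T(b))` on `A × B`, for `φ : A → ℂ`. -/
noncomputable def charExt (T : B →L[ℂ] A) (φ : A →L[ℂ] ℂ) : (A × B) →L[ℂ] ℂ :=
  φ.comp (fst ℂ A B) + (φ.comp T).comp (snd ℂ A B)

/-- The functional `(a,b) ↦ ψ(b)` on `A × B`, for `ψ : B → ℂ`. -/
noncomputable def charSnd (ψ : B →L[ℂ] ℂ) : (A × B) →L[ℂ] ℂ :=
  ψ.comp (snd ℂ A B)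

section MorphismProduct

variable {A B : Type*} [NonUnitalNormedRing A] [NormedSpace ℂ A] [NonUnitalNormedRing B]
  [NormedSpace ℂ B]

/-- Conjugating by `(a, b) ↦ (a + T b, b)` turns `tMul T` into the coordinatewise product
of `A × B`; this is why `tMul T` is associative when `T` is multiplicative. -/
def twist (T : B →L[ℂ] A) (u : A × B) : A × B := (u.1 + T u.2, u.2)

theorem twist_injective (T : B →L[ℂ] A) : Function.Injective (twist T) := by
  rintro ⟨a, b⟩ ⟨a', b'⟩ h
  simp only [twist, Prod.mk.injEq] at h
  obtain ⟨ha, rfl⟩ := h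
  simpa using ha

theorem twist_tMul (T : B →L[ℂ] A) (hT : ∀ x y, T (x * y) = T x * T y) (u v : A × B) :
    twist T (tMul T u v) = twist T u * twist T v := by
  simp only [twist, tMul, hT, Prod.mk_mul_mk, add_mul, mul_add]
  abel_nf

theorem tMul_assoc (T : B →L[ℂ] A) (hT : ∀ x y, T (x * y) = T x * T y) (u v w : A × B) :
    tMul T (tMul T u v) w = tMul T u (tMul T v w) :=
  twist_injective T <| by simp only [twist_tMul T hT, mul_assoc]

theorem add_tMul (T : B →L[ℂ] A) (u v w : A × B) :
    tMul T (u + v) w = tMul T u w + tMul T v w := by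
  simp only [tMul, Prod.fst_add, Prod.snd_add, map_add, add_mul, Prod.mk_add_mk]
  abel_nf

theorem tMul_add (T : B →L[ℂ] A) (u v w : A × B) :
    tMul T u (v + w) = tMul T u v + tMul T u w := by
  simp only [tMul, Prod.fst_add, Prod.snd_add, map_add, mul_add, Prod.mk_add_mk]
  abel_nf

theorem smul_tMul [IsScalarTower ℂ A A] [IsScalarTower ℂ B B] (T : B →L[ℂ] A) (c : ℂ)
    (u v : A × B) : tMul T (c • u) v = c • tMul T u v := by
  simp only [tMul, Prod.smul_fst, Prod.smul_snd, map_smul, smul_mul_assoc, smul_add,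
    Prod.smul_mk]

theorem tMul_smul [SMulCommClass ℂ A A] [SMulCommClass ℂ B B] (T : B →L[ℂ] A) (c : ℂ)
    (u v : A × B) : tMul T u (c • v) = c • tMul T u v := by
  simp only [tMul, Prod.smul_fst, Prod.smul_snd, map_smul, mul_smul_comm, smul_add,
    Prod.smul_mk]

theorem norm_fst_tMul_le (T : B →L[ℂ] A) (hT : ‖T‖ ≤ 1) (u v : A × B) :
    ‖(tMul T u v).1‖ ≤ ‖u.1‖ * ‖v.1‖ + ‖u.1‖ * ‖v.2‖ + ‖u.2‖ * ‖v.1‖ := by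
  have hTx (x : B) : ‖T x‖ ≤ ‖x‖ := by simpa using T.le_of_opNorm_le hT x
  calc ‖u.1 * v.1 + u.1 * T v.2 + T u.2 * v.1‖
      ≤ ‖u.1 * v.1‖ + ‖u.1 * T v.2‖ + ‖T u.2 * v.1‖ := norm_add₃_le
    _ ≤ ‖u.1‖ * ‖v.1‖ + ‖u.1‖ * ‖T v.2‖ + ‖T u.2‖ * ‖v.1‖ := by
      gcongr <;> exact norm_mul_le _ _
    _ ≤ ‖u.1‖ * ‖v.1‖ + ‖u.1‖ * ‖v.2‖ + ‖u.2‖ * ‖v.1‖ := by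
      gcongr <;> apply hTx

theorem tNorm_tMul_le (T : B →L[ℂ] A) (hT : ‖T‖ ≤ 1) (u v : A × B) :
    tNorm (tMul T u v) ≤ tNorm u * tNorm v := by
  have hsnd : ‖u.2 * v.2‖ ≤ ‖u.2‖ * ‖v.2‖ := norm_mul_le _ _
  have hfst := norm_fst_tMul_le T hT u v
  simp only [tNorm, tMul] at hfst ⊢
  nlinarith [norm_nonneg u.2, norm_nonneg v.2]

end MorphismProduct

section NormEquivalence

variable {A B : Type*} [NonUnitalNormedRing A] [NonUnitalNormedRing B]

theorem norm_le_tNorm (u : A × B) : ‖u‖ ≤ tNorm u :=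
  max_le (le_add_of_nonneg_right (norm_nonneg _)) (le_add_of_nonneg_left (norm_nonneg _))

theorem tNorm_le_two_mul_norm (u : A × B) : tNorm u ≤ 2 * ‖u‖ := by
  linarith [norm_fst_le u, norm_snd_le u, show tNorm u = ‖u.1‖ + ‖u.2‖ from rfl]

end NormEquivalence

/-- `A ×_T B` is a Banach algebra: the multiplication `tMul T` is
associative, bilinear, submultiplicative for the norm `tNorm`, and the space is
complete (`tNorm` being equivalent to the product norm). -/
theorem morphism_product_is_banach_algebra
    (T : B →L[ℂ] A) (hT : ∀ x y, T (x * y) = T x * T y) (hTn : ‖T‖ ≤ 1) :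
    (∀ u v w : A × B, tMul T (tMul T u v) w = tMul T u (tMul T v w)) ∧
    (∀ u v w : A × B, tMul T (u + v) w = tMul T u w + tMul T v w) ∧
    (∀ u v w : A × B, tMul T u (v + w) = tMul T u v + tMul T u w) ∧
    (∀ (c : ℂ) (u v : A × B),
      tMul T (c • u) v = c • tMul T u v ∧ tMul T u (c • v) = c • tMul T u v) ∧
    (∀ u v : A × B, tNorm (tMul T u v) ≤ tNorm u * tNorm v) ∧
    (∀ u : A × B, ‖u‖ ≤ tNorm u ∧ tNorm u ≤ 2 * ‖u‖) ∧
    CompleteSpace (A × B) :=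
  ⟨tMul_assoc T hT, add_tMul T, tMul_add T,
    fun c u v => ⟨smul_tMul T c u v, tMul_smul T c u v⟩,
    tNorm_tMul_le T hTn, fun u => ⟨norm_le_tNorm u, tNorm_le_two_mul_norm u⟩, inferInstance⟩
end

section
/- Let A and B be Banach algebras and T ∈ hom(B, A). If φ is a character (non-zero continuous multiplicative linear functional) on A, then the functional (a,b) ↦ φ(a) + φ(T(b)) is a character on A ×_T B. -/
open ContinuousLinearMap NormedSpace

variable {A B : Type*}
  [NonUnitalNormedRing A] [NormedSpace ℂ A] [IsScalarTower ℂ A A] [SMulCommClass ℂ A A]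
  [CompleteSpace A]
  [NonUnitalNormedRing B] [NormedSpace ℂ B] [IsScalarTower ℂ B B] [SMulCommClass ℂ B B]
  [CompleteSpace B]

section

variable {A B : Type*} [NonUnitalNormedRing A] [NormedSpace ℂ A]
  [NonUnitalNormedRing B] [NormedSpace ℂ B] (T : B →L[ℂ] A)

theorem fst_tMul_add_apply_snd (hT : ∀ x y, T (x * y) = T x * T y)
    (u v : A × B) :
    (tMul T u v).1 + T (tMul T u v).2 = (u.1 + T u.2) * (v.1 + T v.2) := by
  simp only [tMul, hT, add_mul, mul_add]
  abel

theorem charExt_apply (φ : A →L[ℂ] ℂ) (u : A × B) :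
    charExt T φ u = φ (u.1 + T u.2) := by
  simp [charExt]

theorem charExt_ne_zero {φ : A →L[ℂ] ℂ} (hφ0 : φ ≠ 0) : charExt T φ ≠ 0 := by
  refine fun h => hφ0 (ext fun a => ?_)
  simpa [charExt_apply] using congrArg (fun f => f (a, (0 : B))) h

theorem charExt_tMul (hT : ∀ x y, T (x * y) = T x * T y)
    {φ : A →L[ℂ] ℂ} (hφm : ∀ x y : A, φ (x * y) = φ x * φ y) (u v : A × B) :
    charExt T φ (tMul T u v) = charExt T φ u * charExt T φ v := by
  simp only [charExt_apply, fst_tMul_add_apply_snd T hT, hφm]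

end

theorem charExt_is_character_general
    (T : B →L[ℂ] A) (hT : ∀ x y, T (x * y) = T x * T y)
    (φ : A →L[ℂ] ℂ) (hφ0 : φ ≠ 0) (hφm : ∀ x y : A, φ (x * y) = φ x * φ y) :
    (∀ (a : A) (b : B), charExt T φ (a, b) = φ a + φ (T b)) ∧
    charExt T φ ≠ 0 ∧
    (∀ u v : A × B, charExt T φ (tMul T u v) = charExt T φ u * charExt T φ v) :=
  ⟨fun _ _ => rfl, charExt_ne_zero T hφ0, charExt_tMul T hT hφm⟩

/-- if `φ` is a character on `A`, then `(a,b) ↦ φ(a) + φ(T(b))` is a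
character on `A ×_T B` (a nonzero continuous multiplicative linear functional). -/
theorem charExt_is_character
    (T : B →L[ℂ] A) (hT : ∀ x y, T (x * y) = T x * T y) (hTn : ‖T‖ ≤ 1)
    (φ : A →L[ℂ] ℂ) (hφ0 : φ ≠ 0) (hφm : ∀ x y : A, φ (x * y) = φ x * φ y) :
    (∀ (a : A) (b : B), charExt T φ (a, b) = φ a + φ (T b)) ∧
    charExt T φ ≠ 0 ∧
    (∀ u v : A × B, charExt T φ (tMul T u v) = charExt T φ u * charExt T φ v) :=
  charExt_is_character_general T hT φ hφ0 hφm
end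

section
/- Let A and B be Banach algebras and T ∈ hom(B, A). Every character χ on A ×_T B is either of the form χ(a,b) = φ(a) + φ(T(b)) for a unique character φ on A, or of the form χ(a,b) = ψ(b) for a unique character ψ on B, and these two families are disjoint. Hence σ(A ×_T B) = {(φ, φ∘T) : φ ∈ σ(A)} ∪ {(0, ψ) : ψ ∈ σ(B)} as a disjoint union. -/
open ContinuousLinearMap NormedSpace

variable {A B : Type*}
  [NonUnitalNormedRing A] [NormedSpace ℂ A] [IsScalarTower ℂ A A] [SMulCommClass ℂ A A]
  [CompleteSpace A]
  [NonUnitalNormedRing B] [NormedSpace ℂ B] [IsScalarTower ℂ B B] [SMulCommClass ℂ B B]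
  [CompleteSpace B]

/-!
Write `φ = χ(·, 0)` and `ψ = χ(0, ·)`, so that `χ(a, b) = φ(a) + ψ(b)`. Both are multiplicative,
and since `(x, 0)(0, b) = (x T(b), 0)` in `A ×_T B` we get `φ(x) φ(T b) = φ(x) ψ(b)`.
Hence either `φ = 0` and `χ = ψ ∘ snd`, or `φ ≠ 0` and cancelling gives `ψ = φ ∘ T`.
Uniqueness and disjointness follow by restricting back to `A × 0` and `0 × B`.
-/

section

variable {A B : Type*} [NonUnitalNormedRing A] [NormedSpace ℂ A] [NonUnitalNormedRing B]
  [NormedSpace ℂ B] (T : B →L[ℂ] A)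

@[simp]
lemma tMul_inl_inl (x y : A) : tMul T (x, 0) (y, 0) = (x * y, (0 : B)) := by
  simp [tMul]

@[simp]
lemma tMul_inr_inr (x y : B) : tMul T ((0 : A), x) (0, y) = (0, x * y) := by
  simp [tMul]

@[simp]
lemma tMul_inl_inr (x : A) (b : B) : tMul T (x, 0) (0, b) = (x * T b, 0) := by
  simp [tMul]

lemma eq_charExt_iff (χ : (A × B) →L[ℂ] ℂ) (φ : A →L[ℂ] ℂ) :
    χ = charExt T φ ↔ ∀ (a : A) (b : B), χ (a, b) = φ a + φ (T b) :=
  ⟨fun h _ _ => h ▸ rfl, fun h => ext fun u => h u.1 u.2⟩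

lemma eq_charSnd_iff (χ : (A × B) →L[ℂ] ℂ) (ψ : B →L[ℂ] ℂ) :
    χ = charSnd ψ ↔ ∀ (a : A) (b : B), χ (a, b) = ψ b :=
  ⟨fun h _ _ => h ▸ rfl, fun h => ext fun u => h u.1 u.2⟩

lemma charExt_comp_inl (φ : A →L[ℂ] ℂ) : (charExt T φ).comp (inl ℂ A B) = φ := by
  ext a
  simp [charExt]

lemma charSnd_comp_inl (ψ : B →L[ℂ] ℂ) : (charSnd ψ).comp (inl ℂ A B) = 0 := by
  ext a
  simp [charSnd]

lemma charSnd_comp_inr (ψ : B →L[ℂ] ℂ) : (charSnd ψ).comp (inr ℂ A B) = ψ := by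
  ext b
  simp [charSnd]

lemma charExt_injective : Function.Injective (charExt T) := fun φ φ' h => by
  rw [← charExt_comp_inl T φ, h, charExt_comp_inl]

lemma charSnd_injective : Function.Injective (charSnd (A := A) (B := B)) :=
  fun ψ ψ' h => by rw [← charSnd_comp_inr (A := A) ψ, h, charSnd_comp_inr]

lemma charExt_ne_charSnd {φ : A →L[ℂ] ℂ} (hφ : φ ≠ 0) (ψ : B →L[ℂ] ℂ) :
    charExt T φ ≠ charSnd ψ := fun h => hφ <| by
  rw [← charExt_comp_inl T φ, h, charSnd_comp_inl]

lemma apply_eq_comp_inl_add_comp_inr (χ : (A × B) →L[ℂ] ℂ) (a : A) (b : B) :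
    χ (a, b) = χ.comp (inl ℂ A B) a + χ.comp (inr ℂ A B) b := by
  simp [← map_add]

lemma eq_charSnd_of_comp_inl_eq_zero {χ : (A × B) →L[ℂ] ℂ} (h : χ.comp (inl ℂ A B) = 0) :
    χ = charSnd (χ.comp (inr ℂ A B)) :=
  (eq_charSnd_iff χ _).2 fun a b => by simp [apply_eq_comp_inl_add_comp_inr χ a b, h]

variable {T} {χ : (A × B) →L[ℂ] ℂ} (hχ : ∀ u v : A × B, χ (tMul T u v) = χ u * χ v)
include hχ

lemma comp_inl_map_mul (x y : A) :
    χ.comp (inl ℂ A B) (x * y) = χ.comp (inl ℂ A B) x * χ.comp (inl ℂ A B) y := by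
  simpa using hχ (x, 0) (y, 0)

lemma comp_inr_map_mul (x y : B) :
    χ.comp (inr ℂ A B) (x * y) = χ.comp (inr ℂ A B) x * χ.comp (inr ℂ A B) y := by
  simpa using hχ (0, x) (0, y)

lemma comp_inr_eq_comp_inl_comp (h : χ.comp (inl ℂ A B) ≠ 0) :
    χ.comp (inr ℂ A B) = (χ.comp (inl ℂ A B)).comp T := by
  obtain ⟨a₀, ha₀⟩ : ∃ a₀, χ.comp (inl ℂ A B) a₀ ≠ 0 := by
    by_contra! h'
    exact h (ext h')
  ext b
  apply mul_left_cancel₀ ha₀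
  have hmix : χ.comp (inl ℂ A B) (a₀ * T b) = χ.comp (inl ℂ A B) a₀ * χ.comp (inr ℂ A B) b := by
    simpa using hχ (a₀, 0) (0, b)
  rw [comp_apply _ T, ← comp_inl_map_mul hχ, hmix]

lemma eq_charExt_of_comp_inl_ne_zero (h : χ.comp (inl ℂ A B) ≠ 0) :
    χ = charExt T (χ.comp (inl ℂ A B)) :=
  (eq_charExt_iff T χ _).2 fun a b => by
    rw [apply_eq_comp_inl_add_comp_inr χ a b, comp_inr_eq_comp_inl_comp hχ h, comp_apply _ T]

end

theorem character_space_characterization_general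
    (T : B →L[ℂ] A)
    (χ : (A × B) →L[ℂ] ℂ) (hχ0 : χ ≠ 0)
    (hχm : ∀ u v : A × B, χ (tMul T u v) = χ u * χ v) :
    Xor'
      (∃! φ : A →L[ℂ] ℂ,
        (φ ≠ 0 ∧ ∀ x y : A, φ (x * y) = φ x * φ y) ∧
          ∀ (a : A) (b : B), χ (a, b) = φ a + φ (T b))
      (∃! ψ : B →L[ℂ] ℂ,
        (ψ ≠ 0 ∧ ∀ x y : B, ψ (x * y) = ψ x * ψ y) ∧
          ∀ (a : A) (b : B), χ (a, b) = ψ b) := by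
  simp only [← eq_charExt_iff, ← eq_charSnd_iff]
  by_cases hφ : χ.comp (inl ℂ A B) = 0
  · have hχ := eq_charSnd_of_comp_inl_eq_zero hφ
    have hψ : χ.comp (inr ℂ A B) ≠ 0 := fun hψ => hχ0 <| by
      rw [hχ, hψ, charSnd, zero_comp]
    refine Or.inr ⟨⟨_, ⟨⟨hψ, comp_inr_map_mul hχm⟩, hχ⟩,
      fun ψ h => charSnd_injective (h.2.symm.trans hχ)⟩, ?_⟩
    rintro ⟨φ, ⟨⟨hφ0, -⟩, hφχ⟩, -⟩
    exact charExt_ne_charSnd T hφ0 _ (hφχ.symm.trans hχ)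
  · have hχ := eq_charExt_of_comp_inl_ne_zero hχm hφ
    refine Or.inl ⟨⟨_, ⟨⟨hφ, comp_inl_map_mul hχm⟩, hχ⟩,
      fun φ h => charExt_injective T (h.2.symm.trans hχ)⟩, ?_⟩
    rintro ⟨ψ, ⟨-, hψχ⟩, -⟩
    exact charExt_ne_charSnd T hφ _ (hχ.symm.trans hψχ)

/-- every character `χ` on `A ×_T B` arises either from a unique
character `φ` on `A` as `χ(a,b) = φ(a) + φ(T(b))`, or from a unique character `ψ`
on `B` as `χ(a,b) = ψ(b)`, and these two families are disjoint. -/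
theorem character_space_characterization
    (T : B →L[ℂ] A) (hT : ∀ x y, T (x * y) = T x * T y) (hTn : ‖T‖ ≤ 1)
    (χ : (A × B) →L[ℂ] ℂ) (hχ0 : χ ≠ 0)
    (hχm : ∀ u v : A × B, χ (tMul T u v) = χ u * χ v) :
    Xor'
      (∃! φ : A →L[ℂ] ℂ,
        (φ ≠ 0 ∧ ∀ x y : A, φ (x * y) = φ x * φ y) ∧
          ∀ (a : A) (b : B), χ (a, b) = φ a + φ (T b))
      (∃! ψ : B →L[ℂ] ℂ,
        (ψ ≠ 0 ∧ ∀ x y : B, ψ (x * y) = ψ x * ψ y) ∧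
          ∀ (a : A) (b : B), χ (a, b) = ψ b) :=
  character_space_characterization_general T χ hχ0 hχm
end

section
/- Let A and B be Banach algebras and T ∈ hom(B, A). If (Φ,Ψ) lies in the left topological center Z_t^{(ℓ)}((A ×_T B)''), then Φ + T''(Ψ) ∈ Z_t^{(ℓ)}(A'') and Ψ ∈ Z_t^{(ℓ)}(B''). -/
open ContinuousLinearMap NormedSpace

variable {A B : Type*}
  [NonUnitalNormedRing A] [NormedSpace ℂ A] [IsScalarTower ℂ A A] [SMulCommClass ℂ A A]
  [CompleteSpace A]
  [NonUnitalNormedRing B] [NormedSpace ℂ B] [IsScalarTower ℂ B B] [SMulCommClass ℂ B B]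
  [CompleteSpace B]

/-! The maps `π (a, b) = a + T b` and `(a, b) ↦ b` are homomorphisms from `A ×_T B` onto `A` and `B`
(for `π` this is where multiplicativity of `T` enters), split by `inl` and `inr`, so their biduals
are surjective. The bidual of a homomorphism respects both Arens products, hence a surjective one
maps `Z_t^{(ℓ)}` into `Z_t^{(ℓ)}`. Finally `π''(Θ(Φ,Ψ)) = Φ + T''(Ψ)` and `snd''(Θ(Φ,Ψ)) = Ψ`. -/

section Bidual

variable {E F : Type*} [NormedAddCommGroup E] [NormedSpace ℂ E]
  [NormedAddCommGroup F] [NormedSpace ℂ F]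

noncomputable def doubleTranspose (θ : E →L[ℂ] F) :
    StrongDual ℂ (StrongDual ℂ E) →L[ℂ] StrongDual ℂ (StrongDual ℂ F) :=
  (compL ℂ (StrongDual ℂ F) (StrongDual ℂ E) ℂ).flip ((compL ℂ E F ℂ).flip θ)

def leftTopCenter (M : E →L[ℂ] E →L[ℂ] E) : Set (StrongDual ℂ (StrongDual ℂ E)) :=
  {X | ∀ Y, arens1 M X Y = arens2 M X Y}

@[simp]
lemma doubleTranspose_apply (θ : E →L[ℂ] F) (Φ : StrongDual ℂ (StrongDual ℂ E))
    (f : StrongDual ℂ F) : doubleTranspose θ Φ f = Φ (f.comp θ) :=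
  rfl

@[simp]
lemma rAct_apply (M : E →L[ℂ] E →L[ℂ] E) (Φ : StrongDual ℂ (StrongDual ℂ E))
    (f : StrongDual ℂ E) (a : E) : rAct M Φ f a = Φ (f.comp (M a)) :=
  rfl

lemma doubleTranspose_surjective_of_comp_eq_id {θ : E →L[ℂ] F} {σ : F →L[ℂ] E}
    (h : θ.comp σ = ContinuousLinearMap.id ℂ F) : Function.Surjective (doubleTranspose θ) :=
  fun Φ => ⟨doubleTranspose σ Φ, by ext f; simp [comp_assoc, h]⟩

variable {ME : E →L[ℂ] E →L[ℂ] E} {MF : F →L[ℂ] F →L[ℂ] F} {θ : E →L[ℂ] F}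

lemma rAct_comp_of_map_mul (hθ : ∀ x y, θ (ME x y) = MF (θ x) (θ y))
    (Φ : StrongDual ℂ (StrongDual ℂ E)) (f : StrongDual ℂ F) :
    rAct ME Φ (f.comp θ) = (rAct MF (doubleTranspose θ Φ) f).comp θ := by
  ext a
  simp only [rAct_apply, comp_apply, doubleTranspose_apply]
  congr 1
  ext x
  simp [hθ]

lemma doubleTranspose_arens1 (hθ : ∀ x y, θ (ME x y) = MF (θ x) (θ y))
    (Φ Ψ : StrongDual ℂ (StrongDual ℂ E)) :
    doubleTranspose θ (arens1 ME Φ Ψ) =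
      arens1 MF (doubleTranspose θ Φ) (doubleTranspose θ Ψ) := by
  ext f
  simp [arens1, rAct_comp_of_map_mul hθ]

lemma doubleTranspose_arens2 (hθ : ∀ x y, θ (ME x y) = MF (θ x) (θ y))
    (Φ Ψ : StrongDual ℂ (StrongDual ℂ E)) :
    doubleTranspose θ (arens2 ME Φ Ψ) =
      arens2 MF (doubleTranspose θ Φ) (doubleTranspose θ Ψ) := by
  ext f
  simp [arens2, rAct_comp_of_map_mul (ME := ME.flip) (MF := MF.flip) (fun x y => hθ y x)]

lemma doubleTranspose_mem_leftTopCenter (hθ : ∀ x y, θ (ME x y) = MF (θ x) (θ y))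
    (hsurj : Function.Surjective (doubleTranspose θ)) {X : StrongDual ℂ (StrongDual ℂ E)}
    (hX : X ∈ leftTopCenter ME) : doubleTranspose θ X ∈ leftTopCenter MF := by
  intro Y
  obtain ⟨Y, rfl⟩ := hsurj Y
  rw [← doubleTranspose_arens1 hθ, ← doubleTranspose_arens2 hθ, hX Y]

end Bidual

section Coordinates

omit [IsScalarTower ℂ A A] [SMulCommClass ℂ A A] [CompleteSpace A]
  [IsScalarTower ℂ B B] [SMulCommClass ℂ B B] [CompleteSpace B]

lemma Theta_apply (Φ : StrongDual ℂ (StrongDual ℂ A)) (Ψ : StrongDual ℂ (StrongDual ℂ B))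
    (F : StrongDual ℂ (A × B)) :
    Theta Φ Ψ F = Φ (F.comp (inl ℂ A B)) + Ψ (F.comp (inr ℂ A B)) :=
  rfl

lemma ddT_apply (T : B →L[ℂ] A) (Ψ : StrongDual ℂ (StrongDual ℂ B)) (g : StrongDual ℂ A) :
    ddT T Ψ g = Ψ (g.comp T) :=
  rfl

lemma doubleTranspose_coprod_id_Theta (T : B →L[ℂ] A) (Φ : StrongDual ℂ (StrongDual ℂ A))
    (Ψ : StrongDual ℂ (StrongDual ℂ B)) :
    doubleTranspose ((ContinuousLinearMap.id ℂ A).coprod T) (Theta Φ Ψ) = Φ + ddT T Ψ := by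
  ext f
  simp only [doubleTranspose_apply, Theta_apply, add_apply, ddT_apply]
  congr 2 <;> ext <;> simp

lemma doubleTranspose_snd_Theta (Φ : StrongDual ℂ (StrongDual ℂ A))
    (Ψ : StrongDual ℂ (StrongDual ℂ B)) :
    doubleTranspose (snd ℂ A B) (Theta Φ Ψ) = Ψ := by
  ext g
  have hsnd_inl : (g.comp (snd ℂ A B)).comp (inl ℂ A B) = 0 := by ext; simp
  simp [Theta_apply, hsnd_inl, comp_assoc]

end Coordinates

section Multiplicativity

omit [CompleteSpace A] [CompleteSpace B]

lemma tMulCLM_apply (T : B →L[ℂ] A) (u v : A × B) :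
    tMulCLM T u v = (u.1 * v.1 + u.1 * T v.2 + T u.2 * v.1, u.2 * v.2) := by
  simp [tMulCLM, bcomp]

lemma coprod_id_map_tMul (T : B →L[ℂ] A) (hT : ∀ x y, T (x * y) = T x * T y) (u v : A × B) :
    (ContinuousLinearMap.id ℂ A).coprod T (tMulCLM T u v) =
      mul ℂ A ((ContinuousLinearMap.id ℂ A).coprod T u)
        ((ContinuousLinearMap.id ℂ A).coprod T v) := by
  simp only [tMulCLM_apply, coprod_apply, id_apply, mul_apply', hT]
  noncomm_ring

lemma snd_map_tMul (T : B →L[ℂ] A) (u v : A × B) :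
    snd ℂ A B (tMulCLM T u v) = mul ℂ B (snd ℂ A B u) (snd ℂ A B v) := by
  simp [tMulCLM_apply]

end Multiplicativity

theorem left_topological_center_necessary_general
    (T : B →L[ℂ] A) (hT : ∀ x y, T (x * y) = T x * T y)
    (Φ : StrongDual ℂ (StrongDual ℂ A)) (Ψ : StrongDual ℂ (StrongDual ℂ B))
    (h : ∀ X : StrongDual ℂ (StrongDual ℂ (A × B)),
      arens1 (tMulCLM T) (Theta Φ Ψ) X = arens2 (tMulCLM T) (Theta Φ Ψ) X) :
    (∀ Φ' : StrongDual ℂ (StrongDual ℂ A),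
      arens1 (mul ℂ A) (Φ + ddT T Ψ) Φ' = arens2 (mul ℂ A) (Φ + ddT T Ψ) Φ') ∧
    (∀ Ψ' : StrongDual ℂ (StrongDual ℂ B),
      arens1 (mul ℂ B) Ψ Ψ' = arens2 (mul ℂ B) Ψ Ψ') := by
  constructor
  · rw [← doubleTranspose_coprod_id_Theta T Φ Ψ]
    exact doubleTranspose_mem_leftTopCenter (coprod_id_map_tMul T hT)
      (doubleTranspose_surjective_of_comp_eq_id (σ := inl ℂ A B) (by ext; simp)) h
  · rw [← doubleTranspose_snd_Theta Φ Ψ]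
    exact doubleTranspose_mem_leftTopCenter (snd_map_tMul T)
      (doubleTranspose_surjective_of_comp_eq_id (σ := inr ℂ A B) (by ext; simp)) h

/-- if `(Φ,Ψ)` lies in the left topological center of `(A ×_T B)''`,
then `Φ + T''(Ψ)` lies in the left topological center of `A''` and `Ψ` in that of `B''`. -/
theorem left_topological_center_necessary
    (T : B →L[ℂ] A) (hT : ∀ x y, T (x * y) = T x * T y) (hTn : ‖T‖ ≤ 1)
    (Φ : StrongDual ℂ (StrongDual ℂ A)) (Ψ : StrongDual ℂ (StrongDual ℂ B))
    (h : ∀ X : StrongDual ℂ (StrongDual ℂ (A × B)),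
      arens1 (tMulCLM T) (Theta Φ Ψ) X = arens2 (tMulCLM T) (Theta Φ Ψ) X) :
    (∀ Φ' : StrongDual ℂ (StrongDual ℂ A),
      arens1 (mul ℂ A) (Φ + ddT T Ψ) Φ' = arens2 (mul ℂ A) (Φ + ddT T Ψ) Φ') ∧
    (∀ Ψ' : StrongDual ℂ (StrongDual ℂ B),
      arens1 (mul ℂ B) Ψ Ψ' = arens2 (mul ℂ B) Ψ Ψ') :=
  left_topological_center_necessary_general T hT Φ Ψ h
end
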